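/- The function φ̃_v(x) = e^{x²/2} x^g L_v^{(g-1/2)}(-x²) satisfies the Schrödinger equation -φ̃_v''(x) + (x² + g(g-1)/x² - 2g - 1) φ̃_v(x) = Ẽ_v φ̃_v(x) on 0 < x < ∞, with Ẽ_v = -4(g + v + 1/2). -/

import Mathlib

/-!
Writing `φ̃(t) = e^{t²/2} t^g Q(-t²)`, two differentiations turn the Schrödinger equation into
Laguerre's equation `η Q'' + (α + 1 - η) Q' + v Q = 0` at `η = -t²`, `α = g - 1/2`; this is the
image under `t ↦ i t` of the usual reduction for the eigenfunction `e^{-t²/2} t^g L_v^{(α)}(t²)`.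
Laguerre's equation for `L_v^{(α)}` amounts to the two-term recurrence between its consecutive
coefficients, which follows from the Pochhammer recurrences.
-/

noncomputable def laguerre (n : ℕ) (α η : ℝ) : ℝ :=
  (1 / n.factorial) * ∑ k ∈ Finset.range (n + 1),
    ((ascPochhammer ℝ k).eval (-(n : ℝ)) / k.factorial) *
      (ascPochhammer ℝ (n - k)).eval (α + k + 1) * η ^ k

open Polynomial

noncomputable def laguerreCoeff (n : ℕ) (α : ℝ) (k : ℕ) : ℝ :=
  (1 / n.factorial) * ((ascPochhammer ℝ k).eval (-(n : ℝ)) / k.factorial) *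
    (ascPochhammer ℝ (n - k)).eval (α + k + 1)

noncomputable def laguerrePoly (n : ℕ) (α : ℝ) : ℝ[X] :=
  ∑ k ∈ Finset.range (n + 1), C (laguerreCoeff n α k) * X ^ k

theorem laguerre_eq_eval_laguerrePoly (n : ℕ) (α η : ℝ) :
    laguerre n α η = (laguerrePoly n α).eval η := by
  simp only [laguerre, laguerrePoly, eval_finsetSum, eval_mul, eval_C, eval_pow, eval_X,
    Finset.mul_sum, laguerreCoeff, mul_assoc]

theorem coeff_laguerrePoly (n : ℕ) (α : ℝ) (k : ℕ) :
    (laguerrePoly n α).coeff k = if k ≤ n then laguerreCoeff n α k else 0 := by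
  simp [laguerrePoly, coeff_C_mul, coeff_X_pow]

theorem laguerreCoeff_succ {n k : ℕ} (hk : k < n) (α : ℝ) :
    ((k : ℝ) + 1) * (α + k + 1) * laguerreCoeff n α (k + 1)
      = ((k : ℝ) - n) * laguerreCoeff n α k := by
  obtain ⟨m, rfl⟩ := Nat.exists_eq_add_of_lt hk
  have hsub : k + m + 1 - k = m + 1 := by omega
  have hsub' : k + m + 1 - (k + 1) = m := by omega
  rw [laguerreCoeff, laguerreCoeff, hsub, hsub', ascPochhammer_succ_eval, ascPochhammer_succ_left,
    Nat.factorial_succ k]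
  simp only [eval_mul, eval_X, eval_comp, eval_add, eval_one]
  push_cast
  rw [show α + ((k : ℝ) + 1) + 1 = α + k + 1 + 1 by ring]
  field_simp
  ring

theorem coeff_laguerrePoly_recurrence (n : ℕ) (α : ℝ) (k : ℕ) :
    ((k : ℝ) + 1) * (α + k + 1) * (laguerrePoly n α).coeff (k + 1)
      + ((n : ℝ) - k) * (laguerrePoly n α).coeff k = 0 := by
  rw [coeff_laguerrePoly, coeff_laguerrePoly]
  rcases lt_trichotomy k n with hk | rfl | hk
  · rw [if_pos (Nat.succ_le_of_lt hk), if_pos hk.le]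
    linear_combination laguerreCoeff_succ hk α
  · simp
  · simp [show ¬ k + 1 ≤ n by omega, show ¬ k ≤ n by omega]

theorem laguerrePoly_ode (n : ℕ) (α : ℝ) :
    X * derivative (derivative (laguerrePoly n α))
      + (C (α + 1) - X) * derivative (laguerrePoly n α) + C (n : ℝ) * laguerrePoly n α = 0 := by
  ext k
  rcases k with _ | k
  · have h := coeff_laguerrePoly_recurrence n α 0
    simp only [coeff_add, coeff_zero, sub_mul, coeff_sub, mul_coeff_zero,
      coeff_X_zero, coeff_derivative, zero_mul, coeff_C_zero]
    push_cast at h ⊢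
    linear_combination h
  · have h := coeff_laguerrePoly_recurrence n α (k + 1)
    simp only [coeff_add, coeff_zero, sub_mul, coeff_sub, coeff_C_mul, coeff_X_mul,
      coeff_derivative]
    push_cast at h ⊢
    linear_combination h

noncomputable def virtualState (c : ℝ) (Q : ℝ[X]) (t : ℝ) : ℝ :=
  Real.exp (t ^ 2 / 2) * t ^ c * Q.eval (-(t ^ 2))

theorem hasDerivAt_virtualState (c : ℝ) (Q : ℝ[X]) {x : ℝ} (hx : 0 < x) :
    HasDerivAt (virtualState c Q)
      (virtualState (c + 1) (Q - 2 * derivative Q) x + c * virtualState (c - 1) Q x) x := by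
  have hexp : HasDerivAt (fun t : ℝ => Real.exp (t ^ 2 / 2)) (Real.exp (x ^ 2 / 2) * x) x := by
    simpa using ((hasDerivAt_pow 2 x).div_const 2).exp
  have hpow : HasDerivAt (fun t : ℝ => t ^ c) (c * x ^ (c - 1)) x :=
    Real.hasDerivAt_rpow_const (Or.inl hx.ne')
  have hpoly : HasDerivAt (fun t : ℝ => Q.eval (-(t ^ 2)))
      ((derivative Q).eval (-(x ^ 2)) * -(2 * x)) x :=
    ((Q.hasDerivAt _).comp x (hasDerivAt_pow 2 x).neg).congr_deriv (by norm_num)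
  refine ((hexp.mul hpow).mul hpoly).congr_deriv ?_
  simp only [virtualState, Pi.mul_apply, Real.rpow_add_one hx.ne', eval_sub, eval_mul, eval_ofNat]
  ring

theorem deriv_virtualState_eventuallyEq (c : ℝ) (Q : ℝ[X]) {x : ℝ} (hx : 0 < x) :
    deriv (virtualState c Q) =ᶠ[nhds x]
      fun t => virtualState (c + 1) (Q - 2 * derivative Q) t + c * virtualState (c - 1) Q t := by
  filter_upwards [Ioi_mem_nhds hx] with t ht
  exact (hasDerivAt_virtualState c Q ht).deriv

theorem virtualState_schrodinger (g ν : ℝ) (Q : ℝ[X])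
    (hQ : X * derivative (derivative Q) + (C (g + 1 / 2) - X) * derivative Q + C ν * Q = 0)
    {x : ℝ} (hx : 0 < x) :
    -deriv (deriv (virtualState g Q)) x
        + (x ^ 2 + g * (g - 1) / x ^ 2 - 2 * g - 1) * virtualState g Q x
      = -4 * (g + ν + 1 / 2) * virtualState g Q x := by
  have hderiv2 := ((hasDerivAt_virtualState (g + 1) (Q - 2 * derivative Q) hx).add
    ((hasDerivAt_virtualState (g - 1) Q hx).const_mul g)).congr_of_eventuallyEq
    (deriv_virtualState_eventuallyEq g Q hx)
  have hode := congrArg (eval (-(x ^ 2))) hQ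
  simp only [eval_add, eval_mul, eval_sub, eval_C, eval_X, eval_zero] at hode
  rw [hderiv2.deriv]
  simp only [virtualState, Real.rpow_add hx, Real.rpow_sub hx, Real.rpow_one, derivative_sub,
    derivative_mul, derivative_ofNat, eval_sub, eval_mul, eval_ofNat, zero_mul, zero_add]
  field_simp
  linear_combination (8 * x ^ 2) * hode

theorem virtual_state_L1_general (g : ℝ) (v : ℕ) (x : ℝ) (hx : 0 < x) :
    -deriv (deriv (fun t => Real.exp (t^2 / 2) * t ^ g * laguerre v (g - 1/2) (-(t^2)))) x
        + (x^2 + g * (g - 1) / x^2 - 2*g - 1)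
          * (Real.exp (x^2 / 2) * x ^ g * laguerre v (g - 1/2) (-(x^2)))
      = (-4 * (g + v + 1/2))
          * (Real.exp (x^2 / 2) * x ^ g * laguerre v (g - 1/2) (-(x^2))) := by
  have hode := laguerrePoly_ode v (g - 1 / 2)
  rw [show g - 1 / 2 + 1 = g + 1 / 2 by ring] at hode
  simp only [laguerre_eq_eval_laguerrePoly]
  exact virtualState_schrodinger g v _ hode hx

theorem virtual_state_L1 (g : ℝ) (hg : 1/2 < g) (v : ℕ) (x : ℝ) (hx : 0 < x) :
    -deriv (deriv (fun t => Real.exp (t^2 / 2) * t ^ g * laguerre v (g - 1/2) (-(t^2)))) x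
        + (x^2 + g * (g - 1) / x^2 - 2*g - 1)
          * (Real.exp (x^2 / 2) * x ^ g * laguerre v (g - 1/2) (-(x^2)))
      = (-4 * (g + v + 1/2))
          * (Real.exp (x^2 / 2) * x ^ g * laguerre v (g - 1/2) (-(x^2))) :=
  virtual_state_L1_general g v x hx
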